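/- Let G = K₂ be the complete graph on two vertices a ≠ b and let H_a = ℤ/2 and H_b = ℤ/3. Then Aut_Part(M(G,H)) is cyclic of order 2, its unique nontrivial element being the automorphism that fixes the nonidentity element of H_a and swaps the two nonidentity elements of H_b (extended letterwise to cyclically reduced words). In particular, every automorphism f of M(G,H) satisfies f(H̃_a) = H̃_a and f(H̃_b) = H̃_b, so the homomorphism Aut_Part(M(G,H)) → Aut_Graphs(G) sending f to the unique graph automorphism σ with f(H̃_v ∖ {∅}) ⊆ H̃_{σ(v)} for all v is trivial and hence not surjective, while Aut_Graphs(K₂) has order 2. -/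

import Mathlib

set_option linter.unusedSectionVars false

open Monoid

namespace PaperPG

/-! ### Generic notions: letters, reduced / cyclically reduced words, reduced forms -/

section Letters

variable {ι : Type*} (H : ι → Type*) [∀ i, Group (H i)]

/-- A letter: a vertex/index together with an element of the corresponding group. -/
abbrev Ltr : Type _ := (i : ι) × H i

/-- A (combinatorially) reduced word: all letters are non-identity and adjacent letters
belong to distinct factors. -/
def IsRed (l : List (Ltr H)) : Prop :=
  (∀ x ∈ l, x.2 ≠ 1) ∧ l.Chain' fun a b => a.1 ≠ b.1

/-- A cyclically reduced word: reduced, and if it has length at least `2`, its first and last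
letters belong to distinct factors. -/
def IsCycRed (l : List (Ltr H)) : Prop :=
  IsRed H l ∧ ∀ a ∈ l.head?, ∀ b ∈ l.getLast?, 2 ≤ l.length → a.1 ≠ b.1

theorem isRed_nil : IsRed H ([] : List (Ltr H)) := by
  exact ⟨by simp, List.isChain_nil⟩

theorem isCycRed_nil : IsCycRed H ([] : List (Ltr H)) := by
  refine ⟨isRed_nil H, ?_⟩
  simp

theorem isCycRed_single (x : Ltr H) (hx : x.2 ≠ 1) : IsCycRed H [x] := by
  refine ⟨⟨by simpa using hx, List.isChain_singleton x⟩, ?_⟩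
  simp

variable [DecidableEq ι] [∀ i, DecidableEq (H i)]

/-- The element of the free product `∗_{i} H i` determined by a word. -/
noncomputable def listProd (l : List (Ltr H)) : CoprodI H :=
  (l.map fun x => CoprodI.of x.2).prod

/-- The reduced form of a word: the unique reduced word representing the product of its
letters in the free product `∗_i H i`. -/
noncomputable def red (l : List (Ltr H)) : List (Ltr H) :=
  (CoprodI.Word.equiv (listProd H l)).toList

/-- The set of indices (vertices) occurring in a word. -/
def verts (l : List (Ltr H)) : Set ι := {i | ∃ x ∈ l, x.1 = i}

/-- The formal inverse of a word: invert every letter and reverse. -/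
def rawInv (l : List (Ltr H)) : List (Ltr H) :=
  (l.map fun x => (⟨x.1, x.2⁻¹⟩ : Ltr H)).reverse

end Letters

/-! ### Homomorphisms of (the underlying data of) partial groups -/

/-- `f` is a homomorphism of partial groups, from the partial group with domain `D₁` and
product `P₁` to the one with domain `D₂` and product `P₂`. -/
def IsHom {M N : Type*} (D₁ : Set (List M)) (P₁ : List M → M)
    (D₂ : Set (List N)) (P₂ : List N → N) (f : M → N) : Prop :=
  (∀ u ∈ D₁, u.map f ∈ D₂) ∧ ∀ u ∈ D₁, P₂ (u.map f) = f (P₁ u)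

theorem isHom_id {M : Type*} (D : Set (List M)) (P : List M → M) : IsHom D P D P id := by
  constructor <;> intro u hu <;> simp [hu]

theorem IsHom.comp {M₁ M₂ M₃ : Type*} {D₁ : Set (List M₁)} {P₁ : List M₁ → M₁}
    {D₂ : Set (List M₂)} {P₂ : List M₂ → M₂} {D₃ : Set (List M₃)} {P₃ : List M₃ → M₃}
    {g : M₂ → M₃} {f : M₁ → M₂} (hg : IsHom D₂ P₂ D₃ P₃ g) (hf : IsHom D₁ P₁ D₂ P₂ f) :
    IsHom D₁ P₁ D₃ P₃ (g ∘ f) := by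
  refine ⟨fun u hu => ?_, fun u hu => ?_⟩
  · rw [← List.map_map]
    exact hg.1 _ (hf.1 u hu)
  · rw [← List.map_map, hg.2 _ (hf.1 u hu), hf.2 u hu]
    rfl

/-! ### The partial group `M(G, H)` associated to a decorated graph -/

section Graph

variable {ι : Type*} (H : ι → Type*) [∀ i, Group (H i)]
  [DecidableEq ι] [∀ i, DecidableEq (H i)] (G : SimpleGraph ι)

/-- Membership in `M(G,H)`: a cyclically reduced word whose set of vertices is a clique. -/
def Mem (l : List (Ltr H)) : Prop := IsCycRed H l ∧ G.IsClique (verts H l)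

theorem mem_nil : Mem H G [] := by
  refine ⟨isCycRed_nil H, ?_⟩
  simp [verts, SimpleGraph.isClique_iff, Set.Pairwise]

theorem mem_single (v : ι) (h : H v) (hne : h ≠ 1) : Mem H G [⟨v, h⟩] := by
  refine ⟨isCycRed_single H _ hne, ?_⟩
  simp only [verts, SimpleGraph.isClique_iff, Set.Pairwise, List.mem_singleton]
  rintro a ⟨x, hx, rfl⟩ b ⟨y, hy, rfl⟩ hne'
  subst hx; subst hy
  exact absurd rfl hne'

/-- A word with letters elements of `M(G,H)` is in the domain `D(G,H)` iff all its letters are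
elements of `M(G,H)`, all occurring vertices lie in a common clique, and the reduced form of
any subproduct `u_i ⋯ u_j` is cyclically reduced. -/
def InD (W : List (List (Ltr H))) : Prop :=
  (∀ u ∈ W, Mem H G u) ∧
  G.IsClique {i | ∃ u ∈ W, i ∈ verts H u} ∧
  ∀ i j : ℕ, i ≤ j → j < W.length →
    IsCycRed H (red H (((W.drop i).take (j + 1 - i)).flatten))

/-- The underlying set of the partial group `M(G,H)`. -/
def Carrier : Type _ := {l : List (Ltr H) // Mem H G l}

/-- The domain of the partial group `M(G,H)`. -/
def pgD : Set (List (Carrier H G)) := {W | InD H G (W.map Subtype.val)}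

/-- The unit of the partial group `M(G,H)`: the empty word. -/
def one : Carrier H G := ⟨[], mem_nil H G⟩

/-- The product map of the partial group `M(G,H)`: the reduced form of the concatenation
(junk value `1` outside of the domain). -/
noncomputable def pgPi (W : List (Carrier H G)) : Carrier H G := by
  classical exact if h : Mem H G (red H (W.map Subtype.val).flatten) then ⟨_, h⟩ else one H G

/-- The inversion of the partial group `M(G,H)` (junk value `1` if the result were not a
member, which never happens). -/
noncomputable def invCar (x : Carrier H G) : Carrier H G := by
  classical exact if h : Mem H G (rawInv H x.val) then ⟨_, h⟩ else one H G

/-- The subset `H̃ᵥ` of `M(G,H)`: the empty word together with the one-letter words with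
letter a nontrivial element of `H v`. -/
def Htilde (v : ι) : Set (Carrier H G) :=
  {x | x.val = [] ∨ ∃ h : H v, h ≠ 1 ∧ x.val = [⟨v, h⟩]}

end Graph

/-! ### Induced maps -/

section Induced

variable {ι ι' : Type*} (H : ι → Type*) [∀ i, Group (H i)]
  [DecidableEq ι] [∀ i, DecidableEq (H i)] (G : SimpleGraph ι)
  (H' : ι' → Type*) [∀ i, Group (H' i)]
  [DecidableEq ι'] [∀ i, DecidableEq (H' i)] (G' : SimpleGraph ι')

/-- The letterwise map on words induced by a map of vertices `fG` and group homomorphisms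
`fH v : H v →* H' (fG v)`. -/
def rawInduced (fG : ι → ι') (fH : ∀ i, H i →* H' (fG i)) (l : List (Ltr H)) :
    List (Ltr H') :=
  l.map fun x => ⟨fG x.1, fH x.1 x.2⟩

/-- The map `M(f_G, {f_v}) : M(G,H) → M(G',H')` (junk value `1` if the image word were not a
member; this never happens when the `fH v` are injective). -/
noncomputable def inducedCar (fG : ι → ι') (fH : ∀ i, H i →* H' (fG i))
    (x : Carrier H G) : Carrier H' G' := by
  classical exact if h : Mem H' G' (rawInduced H H' fG fH x.val) then ⟨_, h⟩ else one H' G'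

/-- A homomorphism of partial groups `M(G,H) → M(G',H')` has torsion-free kernel if the only
element of finite order (as an element of the ambient free product) sent to `1` is `1`. -/
def TFKer (f : Carrier H G → Carrier H' G') : Prop :=
  ∀ x : Carrier H G, f x = one H' G' → IsOfFinOrder (listProd H x.val) → x = one H G

end Induced

/-! ### Automorphism groups -/

section Aut

variable {ι : Type*} (H : ι → Type*) [∀ i, Group (H i)]
  [DecidableEq ι] [∀ i, DecidableEq (H i)] (G : SimpleGraph ι)

/-- The automorphism group of the partial group `M(G,H)`, as a subgroup of the permutation
group of its carrier: bijections that are homomorphisms in both directions. -/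
noncomputable def pgAut : Subgroup (Equiv.Perm (Carrier H G)) where
  carrier := {f | IsHom (pgD H G) (pgPi H G) (pgD H G) (pgPi H G) f ∧
    IsHom (pgD H G) (pgPi H G) (pgD H G) (pgPi H G) f.symm}
  one_mem' := ⟨isHom_id _ _, isHom_id _ _⟩
  mul_mem' := by
    rintro f g ⟨hf, hf'⟩ ⟨hg, hg'⟩
    exact ⟨hf.comp hg, hg'.comp hf'⟩
  inv_mem' := by
    rintro f ⟨hf, hf'⟩
    exact ⟨hf', by simpa [Equiv.Perm.inv_def] using hf⟩

/-- The automorphism group of a simple graph, as a subgroup of the permutation group of its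
vertices: bijections such that both the map and its inverse send edges to edges. -/
def graphAut : Subgroup (Equiv.Perm ι) where
  carrier := {σ | (∀ a b, G.Adj a b → G.Adj (σ a) (σ b)) ∧
    (∀ a b, G.Adj a b → G.Adj (σ.symm a) (σ.symm b))}
  one_mem' := ⟨fun a b h => h, fun a b h => h⟩
  mul_mem' := by
    rintro f g ⟨hf, hf'⟩ ⟨hg, hg'⟩
    exact ⟨fun a b h => hf _ _ (hg _ _ h), fun a b h => hg' _ _ (hf' _ _ h)⟩
  inv_mem' := by
    rintro f ⟨hf, hf'⟩
    exact ⟨hf', by simpa [Equiv.Perm.inv_def] using hf⟩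

/-- An automorphism `f` of `M(G,H)` covers the vertex map `σ` if for every vertex `v`,
`f` sends the nontrivial elements of `H̃ᵥ` into `H̃_{σ v}`. -/
def CoversVia (f : Carrier H G → Carrier H G) (σ : ι → ι) : Prop :=
  ∀ (v : ι) (h : H v) (hne : h ≠ 1),
    ∃ h' : H (σ v), h' ≠ 1 ∧ (f ⟨[⟨v, h⟩], mem_single H G v h hne⟩).val = [⟨σ v, h'⟩]

end Aut

/-! ### Subgroups and locally finite subgroups of partial groups -/

/-- A subset `N` is a subgroup of the partial group with data `(D, P, inv)`: it is closed
under inversion, every word with letters in `N` is in the domain `D`, and `P` maps such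
words into `N`. -/
def IsSubgroupOf {M : Type*} (D : Set (List M)) (P : List M → M) (inv : M → M)
    (N : Set M) : Prop :=
  (∀ x ∈ N, inv x ∈ N) ∧ ∀ W : List M, (∀ u ∈ W, u ∈ N) → W ∈ D ∧ P W ∈ N

/-- A subgroup `N` of a partial group is locally finite: every finite subset of `N` is
contained in a finite subgroup contained in `N` (i.e. every finitely generated subgroup of the
group `N` is finite). -/
def IsLocFinSubgroupOf {M : Type*} (D : Set (List M)) (P : List M → M) (inv : M → M)
    (N : Set M) : Prop :=
  IsSubgroupOf D P inv N ∧
    ∀ S : Set M, S ⊆ N → S.Finite →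
      ∃ K : Set M, S ⊆ K ∧ K ⊆ N ∧ IsSubgroupOf D P inv K ∧ K.Finite

end PaperPG

namespace PaperPG

/-- The decoration of the complete graph on the two vertices `false` (the vertex `a`) and
`true` (the vertex `b`) by the groups `H_a = ℤ/2` and `H_b = ℤ/3` (written
multiplicatively). -/
abbrev H4 : Bool → Type := fun b => cond b (Multiplicative (ZMod 3)) (Multiplicative (ZMod 2))

instance (b : Bool) : Group (H4 b) := by cases b <;> dsimp [H4] <;> infer_instance
instance (b : Bool) : DecidableEq (H4 b) := by cases b <;> dsimp [H4] <;> infer_instance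

/-! ### Auxiliary lemmas -/

section RedLemmas

variable {ι : Type*} (H : ι → Type*) [∀ i, Group (H i)]
  [DecidableEq ι] [∀ i, DecidableEq (H i)]

theorem red_isRed (l : List (Ltr H)) : IsRed H (red H l) :=
  ⟨(CoprodI.Word.equiv (listProd H l)).ne_one, (CoprodI.Word.equiv (listProd H l)).chain_ne⟩

theorem listProd_red (l : List (Ltr H)) : listProd H (red H l) = listProd H l :=
  (CoprodI.Word.equiv (M := H)).symm_apply_apply (listProd H l)

theorem red_eq_self {l : List (Ltr H)} (h : IsRed H l) : red H l = l := by
  have h1 : listProd H l = CoprodI.Word.prod ⟨l, h.1, h.2⟩ := rfl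
  rw [red, h1]
  have h2 : CoprodI.Word.prod ⟨l, h.1, h.2⟩
      = (CoprodI.Word.equiv (M := H)).symm ⟨l, h.1, h.2⟩ := rfl
  rw [h2, Equiv.apply_symm_apply]

theorem red_eq_of_eq {l m : List (Ltr H)} (h : listProd H l = listProd H m) :
    red H l = red H m := by rw [red, red, h]

theorem red_nil : red H ([] : List (Ltr H)) = [] :=
  red_eq_self H ⟨by simp, List.isChain_nil⟩

theorem listProd_nil : listProd H ([] : List (Ltr H)) = 1 := by simp [listProd]

theorem red_eq_nil_iff {l : List (Ltr H)} : red H l = [] ↔ listProd H l = 1 := by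
  constructor
  · intro h
    have := listProd_red H l
    rw [h] at this
    simpa [listProd] using this.symm
  · intro h
    rw [red, h]
    have h0 : (1 : CoprodI H) = listProd H ([] : List (Ltr H)) := by simp [listProd]
    rw [h0]
    exact red_nil H

theorem listProd_append (l m : List (Ltr H)) :
    listProd H (l ++ m) = listProd H l * listProd H m := by
  simp [listProd]

theorem listProd_singleton (x : Ltr H) : listProd H [x] = CoprodI.of x.2 := by
  simp [listProd]

end RedLemmas

section TopLemmas

variable {ι : Type*} (H : ι → Type*) [∀ i, Group (H i)]
  [DecidableEq ι] [∀ i, DecidableEq (H i)]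

theorem isClique_top (s : Set ι) : (⊤ : SimpleGraph ι).IsClique s := by
  intro a _ b _ hab
  simpa using hab

theorem mem_top_iff {l : List (Ltr H)} : Mem H (⊤ : SimpleGraph ι) l ↔ IsCycRed H l :=
  ⟨fun h => h.1, fun h => ⟨h, isClique_top _⟩⟩

theorem mem_pgD_top_iff {W : List (Carrier H (⊤ : SimpleGraph ι))} :
    W ∈ pgD H ⊤ ↔ ∀ i j : ℕ, i ≤ j → j < W.length →
      IsCycRed H (red H ((((W.map Subtype.val).drop i).take (j + 1 - i)).flatten)) := by
  constructor
  · intro h i j hij hj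
    exact h.2.2 i j hij (by unfold Carrier at *; simpa using hj)
  · intro h
    refine ⟨?_, isClique_top _, fun i j hij hj => h i j hij (by unfold Carrier at *; simpa using hj)⟩
    intro u hu
    rcases List.mem_map.1 hu with ⟨c, _, rfl⟩
    exact c.2

theorem one_val : (one H (⊤ : SimpleGraph ι)).val = [] := rfl

theorem nil_mem_pgD : ([] : List (Carrier H (⊤ : SimpleGraph ι))) ∈ pgD H ⊤ := by
  rw [mem_pgD_top_iff]
  intro i j _ hj
  simp at hj

theorem pgPi_val {W : List (Carrier H (⊤ : SimpleGraph ι))} (hW : W ∈ pgD H ⊤) :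
    (pgPi H ⊤ W).val = red H (W.map Subtype.val).flatten := by
  have hmem : Mem H (⊤ : SimpleGraph ι) (red H (W.map Subtype.val).flatten) := by
    rw [mem_top_iff]
    unfold Carrier at *
    rcases W with _ | ⟨c, L⟩
    · simp only [List.map_nil, List.flatten_nil, red_nil]
      exact isCycRed_nil H
    · have h2 := hW.2.2 0 L.length (Nat.zero_le _) (by simp)
      rw [Nat.sub_zero, List.drop_zero] at h2
      have h3 : (((c :: L).map Subtype.val)).take (L.length + 1) = (c :: L).map Subtype.val :=
        List.take_of_length_le (by simp)
      rwa [h3] at h2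
  rw [pgPi]
  exact congrArg Subtype.val (dif_pos hmem)

theorem pgPi_nil : pgPi H (⊤ : SimpleGraph ι) [] = one H ⊤ := by
  apply Subtype.ext
  rw [pgPi_val H (nil_mem_pgD H), one_val]
  unfold Carrier at *
  simp [red_nil]

theorem single_mem_pgD (x : Carrier H (⊤ : SimpleGraph ι)) : [x] ∈ pgD H ⊤ := by
  rw [mem_pgD_top_iff]
  intro i j hij hj
  simp only [List.length_singleton] at hj
  have hi0 : i = 0 := by omega
  have hj0 : j = 0 := by omega
  subst hi0; subst hj0
  unfold Carrier at *
  simpa [red_eq_self H ((mem_top_iff H).1 x.2).1] using ((mem_top_iff H).1 x.2)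

theorem pgPi_single (x : Carrier H (⊤ : SimpleGraph ι)) : pgPi H ⊤ [x] = x := by
  apply Subtype.ext
  rw [pgPi_val H (single_mem_pgD H x)]
  unfold Carrier at *
  simpa using red_eq_self H ((mem_top_iff H).1 x.2).1

theorem pair_mem_pgD {x y : Carrier H (⊤ : SimpleGraph ι)}
    (h : IsCycRed H (red H (x.val ++ y.val))) : [x, y] ∈ pgD H ⊤ := by
  rw [mem_pgD_top_iff]
  intro i j hij hj
  simp only [List.length_cons, List.length_nil] at hj
  have : i = 0 ∧ j = 0 ∨ i = 0 ∧ j = 1 ∨ i = 1 ∧ j = 1 := by omega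
  unfold Carrier at *
  rcases this with ⟨rfl, rfl⟩ | ⟨rfl, rfl⟩ | ⟨rfl, rfl⟩
  · simpa [red_eq_self H ((mem_top_iff H).1 x.2).1] using ((mem_top_iff H).1 x.2)
  · simpa using h
  · simpa [red_eq_self H ((mem_top_iff H).1 y.2).1] using ((mem_top_iff H).1 y.2)

theorem pgPi_pair_val {x y : Carrier H (⊤ : SimpleGraph ι)}
    (h : IsCycRed H (red H (x.val ++ y.val))) :
    (pgPi H ⊤ [x, y]).val = red H (x.val ++ y.val) := by
  rw [pgPi_val H (pair_mem_pgD H h)]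
  unfold Carrier at *
  simp

theorem triple_mem_pgD {x y z : Carrier H (⊤ : SimpleGraph ι)}
    (hxy : IsCycRed H (red H (x.val ++ y.val)))
    (hyz : IsCycRed H (red H (y.val ++ z.val)))
    (hxyz : IsCycRed H (red H (x.val ++ y.val ++ z.val))) : [x, y, z] ∈ pgD H ⊤ := by
  rw [mem_pgD_top_iff]
  intro i j hij hj
  simp only [List.length_cons, List.length_nil] at hj
  have : i = 0 ∧ j = 0 ∨ i = 0 ∧ j = 1 ∨ i = 0 ∧ j = 2 ∨ i = 1 ∧ j = 1 ∨ i = 1 ∧ j = 2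
      ∨ i = 2 ∧ j = 2 := by omega
  unfold Carrier at *
  rcases this with ⟨rfl, rfl⟩ | ⟨rfl, rfl⟩ | ⟨rfl, rfl⟩ | ⟨rfl, rfl⟩ | ⟨rfl, rfl⟩ | ⟨rfl, rfl⟩
  · simpa [red_eq_self H ((mem_top_iff H).1 x.2).1] using ((mem_top_iff H).1 x.2)
  · simpa using hxy
  · simpa [List.append_assoc] using hxyz
  · simpa [red_eq_self H ((mem_top_iff H).1 y.2).1] using ((mem_top_iff H).1 y.2)
  · simpa using hyz
  · simpa [red_eq_self H ((mem_top_iff H).1 z.2).1] using ((mem_top_iff H).1 z.2)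

theorem pgPi_pair_eq {x y : Carrier H (⊤ : SimpleGraph ι)}
    (h : IsCycRed H (red H (x.val ++ y.val))) :
    pgPi H ⊤ [x, y] = ⟨red H (x.val ++ y.val), (mem_top_iff H).2 h⟩ :=
  Subtype.ext (pgPi_pair_val H h)

end TopLemmas

section H4Lemmas

open Multiplicative

/-- Shorthand for the carrier in question. -/
abbrev Car4 := Carrier H4 (⊤ : SimpleGraph Bool)

theorem H4_comm : ∀ (i : Bool) (g h : H4 i), g * h = h * g := by
  intro i
  cases i
  · exact fun g h => (by decide : ∀ g h : Multiplicative (ZMod 2), g * h = h * g) g h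
  · exact fun g h => (by decide : ∀ g h : Multiplicative (ZMod 3), g * h = h * g) g h

/-- One-letter elements. -/
def atm (p : Ltr H4) (hne : p.2 ≠ 1) : Car4 := ⟨[p], mem_single H4 ⊤ p.1 p.2 hne⟩

def aL : Ltr H4 := ⟨false, (ofAdd (1 : ZMod 2) : Multiplicative (ZMod 2))⟩
def bL : Ltr H4 := ⟨true, (ofAdd (1 : ZMod 3) : Multiplicative (ZMod 3))⟩
def b2L : Ltr H4 := ⟨true, (ofAdd (2 : ZMod 3) : Multiplicative (ZMod 3))⟩

theorem aL_ne : aL.2 ≠ 1 :=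
  (by decide : (ofAdd (1 : ZMod 2) : Multiplicative (ZMod 2)) ≠ 1)
theorem bL_ne : bL.2 ≠ 1 :=
  (by decide : (ofAdd (1 : ZMod 3) : Multiplicative (ZMod 3)) ≠ 1)
theorem b2L_ne : b2L.2 ≠ 1 :=
  (by decide : (ofAdd (2 : ZMod 3) : Multiplicative (ZMod 3)) ≠ 1)

def aEl : Car4 := atm aL aL_ne
def bEl : Car4 := atm bL bL_ne
def b2El : Car4 := atm b2L b2L_ne

theorem atm_val (p : Ltr H4) (hne : p.2 ≠ 1) : (atm p hne).val = [p] := rfl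

theorem aEl_ne_one : aEl ≠ one H4 ⊤ := by
  intro h
  have := congrArg Subtype.val h
  simp [aEl, atm, one] at this

theorem bEl_ne_one : bEl ≠ one H4 ⊤ := by
  intro h
  have := congrArg Subtype.val h
  simp [bEl, atm, one] at this

/-- A reduced `l ++ l` for a cyclically reduced word of length at least 2. -/
theorem isRed_self_append {l : List (Ltr H4)} (h : IsCycRed H4 l) (hl : 2 ≤ l.length) :
    IsRed H4 (l ++ l) := by
  refine ⟨fun x hx => ?_, ?_⟩
  · rcases List.mem_append.1 hx with hx | hx <;> exact h.1.1 x hx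
  · refine List.isChain_append.2 ?_
    refine ⟨h.1.2, h.1.2, fun a ha b hb => ?_⟩
    exact (h.2 b hb a ha hl).symm

theorem isRed_self_append3 {l : List (Ltr H4)} (h : IsCycRed H4 l) (hl : 2 ≤ l.length) :
    IsRed H4 (l ++ (l ++ l)) := by
  refine ⟨fun x hx => ?_, ?_⟩
  · simp only [List.mem_append] at hx
    rcases hx with hx | hx | hx <;> exact h.1.1 x hx
  · refine List.isChain_append.2 ?_
    refine ⟨h.1.2, (isRed_self_append h hl).2, fun a ha b hb => ?_⟩
    rcases l with _ | ⟨c, m⟩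
    · simp at hl
    · simp only [List.cons_append, List.head?_cons, Option.mem_some_iff] at hb
      subst hb
      exact (h.2 c (by simp) a ha hl).symm

/-- Classification of square roots of 1 in `M(K₂, {ℤ/2, ℤ/3})`. -/
theorem sq_classification {x : Car4} (hD : [x, x] ∈ pgD H4 ⊤)
    (hPi : pgPi H4 ⊤ [x, x] = one H4 ⊤) : x = one H4 ⊤ ∨ x = aEl := by
  have hval : red H4 (x.val ++ x.val) = [] := by
    have := congrArg Subtype.val hPi
    rw [pgPi_val H4 hD, one_val] at this
    change red H4 (x.val ++ (x.val ++ [])) = [] at this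
    rwa [List.append_nil] at this
  have hcyc : IsCycRed H4 x.val := (mem_top_iff H4).1 x.2
  rcases hx : x.val with _ | ⟨p, _ | ⟨q, m⟩⟩
  · exact Or.inl (Subtype.ext hx)
  · -- single letter
    rw [hx] at hval
    have hne : p.2 ≠ 1 := hcyc.1.1 p (by rw [hx]; simp)
    have hsq : p.2 * p.2 = 1 := by
      by_contra hsq
      have h1 : red H4 ([p] ++ [p]) = [(⟨p.1, p.2 * p.2⟩ : Ltr H4)] := by
        rw [red_eq_of_eq H4 (l := [p] ++ [p]) (m := [⟨p.1, p.2 * p.2⟩]) (by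
          rw [listProd_append]
          simp only [listProd_singleton]
          exact (map_mul CoprodI.of p.2 p.2).symm)]
        exact red_eq_self H4 ⟨fun x hx => by
          rw [List.mem_singleton] at hx; subst hx; exact hsq, List.isChain_singleton _⟩
      rw [h1] at hval
      exact List.cons_ne_nil _ _ hval
    rcases p with ⟨v, g⟩
    cases v
    · refine Or.inr (Subtype.ext ?_)
      rw [hx, aEl, atm_val]
      have hg : g = (ofAdd (1 : ZMod 2) : Multiplicative (ZMod 2)) :=
        (by decide : ∀ g : Multiplicative (ZMod 2), g ≠ 1 → g = ofAdd (1 : ZMod 2)) g hne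
      rw [hg]
      rfl
    · exact absurd hsq
        ((by decide : ∀ g : Multiplicative (ZMod 3), g ≠ 1 → ¬g * g = 1) g hne)
  · -- length at least two
    exfalso
    have h2 : 2 ≤ x.val.length := by rw [hx]; simp only [List.length_cons]; omega
    have := red_eq_self H4 (isRed_self_append hcyc h2)
    rw [this, hx] at hval
    simp at hval

/-- Classification of cube roots of 1 in `M(K₂, {ℤ/2, ℤ/3})`. -/
theorem cube_classification {x : Car4} (hD : [x, x, x] ∈ pgD H4 ⊤)
    (hPi : pgPi H4 ⊤ [x, x, x] = one H4 ⊤) :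
    x = one H4 ⊤ ∨ x = bEl ∨ x = b2El := by
  have hval : red H4 (x.val ++ (x.val ++ x.val)) = [] := by
    have := congrArg Subtype.val hPi
    rw [pgPi_val H4 hD, one_val] at this
    change red H4 (x.val ++ (x.val ++ (x.val ++ []))) = [] at this
    rwa [List.append_nil] at this
  have hcyc : IsCycRed H4 x.val := (mem_top_iff H4).1 x.2
  rcases hx : x.val with _ | ⟨p, _ | ⟨q, m⟩⟩
  · exact Or.inl (Subtype.ext hx)
  · rw [hx] at hval
    have hne : p.2 ≠ 1 := hcyc.1.1 p (by rw [hx]; simp)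
    have hcube : p.2 * (p.2 * p.2) = 1 := by
      by_contra hcube
      have h1 : red H4 ([p] ++ ([p] ++ [p])) = [(⟨p.1, p.2 * (p.2 * p.2)⟩ : Ltr H4)] := by
        rw [red_eq_of_eq H4 (l := [p] ++ ([p] ++ [p])) (m := [⟨p.1, p.2 * (p.2 * p.2)⟩]) (by
          rw [listProd_append, listProd_append]
          simp only [listProd_singleton]
          rw [← map_mul, ← map_mul])]
        exact red_eq_self H4 ⟨fun x hx => by
          rw [List.mem_singleton] at hx; subst hx; exact hcube, List.isChain_singleton _⟩
      rw [h1] at hval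
      exact List.cons_ne_nil _ _ hval
    rcases p with ⟨v, g⟩
    cases v
    · exact absurd hcube
        ((by decide : ∀ g : Multiplicative (ZMod 2), g ≠ 1 → ¬g * (g * g) = 1) g hne)
    · have hg : g = (ofAdd (1 : ZMod 3) : Multiplicative (ZMod 3))
          ∨ g = (ofAdd (2 : ZMod 3) : Multiplicative (ZMod 3)) :=
        (by decide : ∀ g : Multiplicative (ZMod 3), g ≠ 1 →
          g = ofAdd (1 : ZMod 3) ∨ g = ofAdd (2 : ZMod 3)) g hne
      rcases hg with hg | hg
      · refine Or.inr (Or.inl (Subtype.ext ?_))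
        rw [hx, bEl, atm_val, hg]
        rfl
      · refine Or.inr (Or.inr (Subtype.ext ?_))
        rw [hx, b2El, atm_val, hg]
        rfl
  · exfalso
    have h2 : 2 ≤ x.val.length := by rw [hx]; simp only [List.length_cons]; omega
    have := red_eq_self H4 (isRed_self_append3 hcyc h2)
    rw [this, hx] at hval
    simp at hval

end H4Lemmas

section AutLemmas

open Multiplicative

theorem mem_pgAut_iff {f : Equiv.Perm Car4} :
    f ∈ pgAut H4 (⊤ : SimpleGraph Bool) ↔
      IsHom (pgD H4 ⊤) (pgPi H4 ⊤) (pgD H4 ⊤) (pgPi H4 ⊤) ⇑f ∧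
      IsHom (pgD H4 ⊤) (pgPi H4 ⊤) (pgD H4 ⊤) (pgPi H4 ⊤) ⇑f.symm :=
  Iff.rfl

theorem bool_ne_trick : ∀ x y z : Bool, x ≠ y → z ≠ y → x = z := by decide

/-- Concrete reduction computations -/
theorem red_aa : red H4 ([aL] ++ [aL]) = [] := by
  rw [red_eq_nil_iff, listProd_append, listProd_singleton, ← map_mul]
  rw [show aL.2 * aL.2 = 1 by decide]
  exact map_one _

theorem red_bb : red H4 ([bL] ++ [bL]) = [b2L] := by
  rw [red_eq_of_eq H4 (l := [bL] ++ [bL]) (m := [b2L]) (by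
    rw [listProd_append, listProd_singleton, listProd_singleton, ← map_mul]
    rw [show bL.2 * bL.2 = b2L.2 by rfl]
    rfl)]
  exact red_eq_self H4 ⟨fun x hx => by
    rw [List.mem_singleton] at hx; subst hx; exact b2L_ne, List.isChain_singleton _⟩

theorem red_bbb : red H4 ([bL] ++ [bL] ++ [bL]) = [] := by
  rw [red_eq_nil_iff, listProd_append, listProd_append, listProd_singleton, ← map_mul, ← map_mul]
  rw [show bL.2 * bL.2 * bL.2 = 1 by decide]
  exact map_one _

theorem aEl_val : aEl.val = [aL] := rfl
theorem bEl_val : bEl.val = [bL] := rfl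
theorem b2El_val : b2El.val = [b2L] := rfl

theorem pgD_aa : [aEl, aEl] ∈ pgD H4 ⊤ := by
  apply pair_mem_pgD
  rw [aEl_val, red_aa]
  exact isCycRed_nil H4

theorem pgPi_aa : pgPi H4 ⊤ [aEl, aEl] = one H4 ⊤ := by
  apply Subtype.ext
  rw [pgPi_pair_val H4 (by rw [aEl_val, red_aa]; exact isCycRed_nil H4), aEl_val, red_aa, one_val]

theorem pgD_bb : [bEl, bEl] ∈ pgD H4 ⊤ := by
  apply pair_mem_pgD
  rw [bEl_val, red_bb]
  exact (mem_top_iff H4).1 b2El.2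

theorem pgPi_bb : pgPi H4 ⊤ [bEl, bEl] = b2El := by
  apply Subtype.ext
  rw [pgPi_pair_val H4 (by rw [bEl_val, red_bb]; exact (mem_top_iff H4).1 b2El.2),
    bEl_val, red_bb, b2El_val]

theorem pgD_bbb : [bEl, bEl, bEl] ∈ pgD H4 ⊤ := by
  apply triple_mem_pgD <;> rw [bEl_val]
  · rw [red_bb]; exact (mem_top_iff H4).1 b2El.2
  · rw [red_bb]; exact (mem_top_iff H4).1 b2El.2
  · rw [red_bbb]; exact isCycRed_nil H4

theorem pgPi_bbb : pgPi H4 ⊤ [bEl, bEl, bEl] = one H4 ⊤ := by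
  apply Subtype.ext
  rw [pgPi_val H4 (pgD_bbb), one_val]
  have : ([bEl, bEl, bEl].map Subtype.val).flatten = [bL] ++ [bL] ++ [bL] := by
    rfl
  rw [this, red_bbb]

variable {f : Equiv.Perm Car4} (hf : f ∈ pgAut H4 (⊤ : SimpleGraph Bool))

include hf

theorem aut_one : f (one H4 ⊤) = one H4 ⊤ := by
  have h := hf.1.2 [] (nil_mem_pgD H4)
  rw [List.map_nil, pgPi_nil] at h
  exact h.symm

theorem aut_aEl : f aEl = aEl := by
  have hD' : [f aEl, f aEl] ∈ pgD H4 ⊤ := by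
    have := hf.1.1 [aEl, aEl] pgD_aa
    simpa using this
  have hPi' : pgPi H4 ⊤ [f aEl, f aEl] = one H4 ⊤ := by
    have := hf.1.2 [aEl, aEl] pgD_aa
    rw [pgPi_aa, aut_one hf] at this
    simpa using this
  rcases sq_classification hD' hPi' with h | h
  · exact absurd (f.injective (h.trans (aut_one hf).symm)) aEl_ne_one
  · exact h

theorem aut_bEl : f bEl = bEl ∨ f bEl = b2El := by
  have hD' : [f bEl, f bEl, f bEl] ∈ pgD H4 ⊤ := by
    have := hf.1.1 [bEl, bEl, bEl] pgD_bbb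
    simpa using this
  have hPi' : pgPi H4 ⊤ [f bEl, f bEl, f bEl] = one H4 ⊤ := by
    have := hf.1.2 [bEl, bEl, bEl] pgD_bbb
    rw [pgPi_bbb, aut_one hf] at this
    simpa using this
  rcases cube_classification hD' hPi' with h | h
  · exact absurd (f.injective (h.trans (aut_one hf).symm)) bEl_ne_one
  · exact h

theorem aut_b2El : f b2El = pgPi H4 ⊤ [f bEl, f bEl] := by
  have := hf.1.2 [bEl, bEl] pgD_bb
  rw [pgPi_bb] at this
  rw [← this]
  simp

/-- If an automorphism fixes the two generators, it fixes all atoms. -/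
theorem aut_fix_atoms (ha : f aEl = aEl) (hb : f bEl = bEl) :
    ∀ (p : Ltr H4) (hne : p.2 ≠ 1), f (atm p hne) = atm p hne := by
  have hb2 : f b2El = b2El := by rw [aut_b2El hf, hb, pgPi_bb]
  rintro ⟨v, g⟩ hne
  cases v
  · have hg : g = (ofAdd (1 : ZMod 2) : Multiplicative (ZMod 2)) :=
      (by decide : ∀ g : Multiplicative (ZMod 2), g ≠ 1 → g = ofAdd (1 : ZMod 2)) g hne
    have he : atm ⟨false, g⟩ hne = aEl := Subtype.ext (by
      rw [atm_val, aEl_val, aL, hg])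
    rw [he, ha]
  · have hg : g = (ofAdd (1 : ZMod 3) : Multiplicative (ZMod 3))
        ∨ g = (ofAdd (2 : ZMod 3) : Multiplicative (ZMod 3)) :=
      (by decide : ∀ g : Multiplicative (ZMod 3), g ≠ 1 →
        g = ofAdd (1 : ZMod 3) ∨ g = ofAdd (2 : ZMod 3)) g hne
    rcases hg with hg | hg
    · have he : atm ⟨true, g⟩ hne = bEl := Subtype.ext (by rw [atm_val, bEl_val, bL, hg])
      rw [he, hb]
    · have he : atm ⟨true, g⟩ hne = b2El := Subtype.ext (by rw [atm_val, b2El_val, b2L, hg])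
      rw [he, hb2]

/-- If an automorphism fixes the two generators, it fixes all two-letter elements. -/
theorem aut_fix_pairs (ha : f aEl = aEl) (hb : f bEl = bEl)
    (p q : Ltr H4) (h : Mem H4 (⊤ : SimpleGraph Bool) [p, q]) :
    f ⟨[p, q], h⟩ = ⟨[p, q], h⟩ := by
  have hpne : p.2 ≠ 1 := h.1.1.1 p (by simp)
  have hqne : q.2 ≠ 1 := h.1.1.1 q (by simp)
  have hpq : p.1 ≠ q.1 := (List.isChain_cons_cons.1 h.1.1.2).1
  have hred : red H4 ([p] ++ [q]) = [p, q] :=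
    red_eq_self H4 ⟨fun x hx => by
      rcases List.mem_append.1 hx with hx | hx <;> rw [List.mem_singleton] at hx <;>
        subst hx <;> assumption, List.isChain_pair.2 hpq⟩
  have hcyc : IsCycRed H4 (red H4 ((atm p hpne).val ++ (atm q hqne).val)) := by
    rw [atm_val, atm_val, hred]
    exact h.1
  have hD : [atm p hpne, atm q hqne] ∈ pgD H4 ⊤ := pair_mem_pgD H4 hcyc
  have hPi : pgPi H4 ⊤ [atm p hpne, atm q hqne] = ⟨[p, q], h⟩ := by
    apply Subtype.ext
    rw [pgPi_pair_val H4 hcyc, atm_val, atm_val, hred]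
  have h2 := hf.1.2 [atm p hpne, atm q hqne] hD
  rw [hPi] at h2
  rw [← h2]
  simp only [List.map_cons, List.map_nil]
  rw [aut_fix_atoms hf ha hb p hpne, aut_fix_atoms hf ha hb q hqne, hPi]

/-- Rigidity: an automorphism fixing the two generators is the identity. -/
theorem aut_rigid (ha : f aEl = aEl) (hb : f bEl = bEl) : ∀ x : Car4, f x = x := by
  suffices h : ∀ (n : ℕ) (x : Car4), x.val.length ≤ n → f x = x by
    exact fun x => h x.val.length x le_rfl
  intro n
  induction n with
  | zero =>
    intro x hx
    have hnil : x.val = [] := List.length_eq_zero_iff.1 (Nat.le_zero.1 hx)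
    have hx1 : x = one H4 ⊤ := Subtype.ext (by rw [hnil, one_val])
    rw [hx1]
    exact aut_one hf
  | succ n ih =>
    intro x hx
    rcases hlist : x.val with _ | ⟨p0, _ | ⟨q0, m0⟩⟩
    · rw [Subtype.ext (show x.val = (one H4 ⊤).val by rw [hlist, one_val])]
      exact aut_one hf
    · have hne : p0.2 ≠ 1 := ((mem_top_iff H4).1 x.2).1.1 p0 (by rw [hlist]; simp)
      have hx1 : x = atm p0 hne := Subtype.ext (by rw [hlist, atm_val])
      rw [hx1]
      exact aut_fix_atoms hf ha hb p0 hne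
    · -- length at least 2: split off the last two letters
      rcases (q0 :: m0).eq_nil_or_concat with h0 | ⟨M1, q, hM1⟩
      · simp at h0
      rcases (p0 :: M1).eq_nil_or_concat with h0 | ⟨L', p, hL'⟩
      · simp at h0
      have hxval : x.val = L' ++ [p, q] := by
        rw [hlist, show p0 :: q0 :: m0 = p0 :: (q0 :: m0) from rfl, hM1,
          List.concat_eq_append, ← List.cons_append, hL', List.concat_eq_append]
        simp
      have hcyc : IsCycRed H4 (L' ++ [p, q]) := by
        rw [← hxval]; exact (mem_top_iff H4).1 x.2
      obtain ⟨cL', cpq, hjunc⟩ := List.isChain_append.1 hcyc.1.2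
      have hpq : p.1 ≠ q.1 := (List.isChain_cons_cons.1 cpq).1
      have hL'mem : Mem H4 (⊤ : SimpleGraph Bool) L' := by
        rw [mem_top_iff]
        refine ⟨⟨fun y hy => hcyc.1.1 y (by rw [List.mem_append]; exact Or.inl hy), cL'⟩, ?_⟩
        intro a ha' b hb' hlen2
        have hbq : b.1 = q.1 := by
          have hbp : b.1 ≠ p.1 := hjunc b hb' p (by simp)
          exact bool_ne_trick b.1 p.1 q.1 hbp hpq.symm
        rcases L' with _ | ⟨a0, t⟩
        · simp at hlen2
        have ha0 : a0 = a := by simpa using ha'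
        have hwhole : a0.1 ≠ q.1 := by
          apply hcyc.2 a0 (by simp) q
          · rw [show (a0 :: t) ++ [p, q] = ((a0 :: t) ++ [p]) ++ [q] by simp,
              List.getLast?_concat]
            rfl
          · simp only [List.length_append, List.length_cons]; omega
        rw [← ha0, hbq]
        exact hwhole
      have hpqmem : Mem H4 (⊤ : SimpleGraph Bool) [p, q] := by
        rw [mem_top_iff]
        refine ⟨⟨fun y hy => hcyc.1.1 y (by rw [List.mem_append]; exact Or.inr hy), cpq⟩, ?_⟩
        intro a ha' b hb' _
        have ha2 : p = a := by simpa using ha'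
        have hb2 : q = b := by simpa using hb'
        rw [← ha2, ← hb2]
        exact hpq
      set u : Car4 := ⟨L', hL'mem⟩ with hu
      set w : Car4 := ⟨[p, q], hpqmem⟩ with hw
      have hredfull : red H4 (u.val ++ w.val) = L' ++ [p, q] := red_eq_self H4 hcyc.1
      have hcyc2 : IsCycRed H4 (red H4 (u.val ++ w.val)) := by rw [hredfull]; exact hcyc
      have hD : [u, w] ∈ pgD H4 ⊤ := pair_mem_pgD H4 hcyc2
      have hPi : pgPi H4 ⊤ [u, w] = x := by
        apply Subtype.ext
        rw [pgPi_pair_val H4 hcyc2, hredfull, hxval]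
      have hlenL' : L'.length ≤ n := by
        have : x.val.length = L'.length + 2 := by rw [hxval]; simp
        omega
      have h2 := hf.1.2 [u, w] hD
      rw [hPi] at h2
      rw [← h2]
      simp only [List.map_cons, List.map_nil]
      rw [ih u hlenL', aut_fix_pairs hf ha hb p q hpqmem, hPi]

end AutLemmas

section Inversion

/-- Inversion as a monoid hom on each (abelian) factor. -/
def invH (i : Bool) : H4 i →* H4 i where
  toFun g := g⁻¹
  map_one' := inv_one
  map_mul' g h := by
    show (g * h)⁻¹ = g⁻¹ * h⁻¹
    rw [mul_inv_rev, H4_comm]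

/-- The induced endomorphism of the free product. -/
noncomputable def Phi : CoprodI H4 →* CoprodI H4 :=
  CoprodI.lift fun i => CoprodI.of.comp (invH i)

theorem Phi_of {i : Bool} (g : H4 i) : Phi (CoprodI.of g) = CoprodI.of g⁻¹ := by
  rw [Phi, CoprodI.lift_of]
  rfl

/-- Letterwise inversion of words. -/
def linv (l : List (Ltr H4)) : List (Ltr H4) := l.map fun p => ⟨p.1, p.2⁻¹⟩

theorem linv_eq : linv = List.map (fun p => (⟨p.1, p.2⁻¹⟩ : Ltr H4)) := rfl

theorem listProd_linv (l : List (Ltr H4)) : listProd H4 (linv l) = Phi (listProd H4 l) := by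
  induction l with
  | nil => simp [linv, listProd]
  | cons p t ih =>
    have h1 : listProd H4 (linv (p :: t)) = CoprodI.of p.2⁻¹ * listProd H4 (linv t) := by
      simp [linv, listProd]
    have h2 : listProd H4 (p :: t) = CoprodI.of p.2 * listProd H4 t := by simp [listProd]
    rw [h1, h2, map_mul, ih, Phi_of]

theorem isRed_linv {l : List (Ltr H4)} (h : IsRed H4 l) : IsRed H4 (linv l) := by
  constructor
  · intro x hx
    rcases List.mem_map.1 hx with ⟨y, hy, rfl⟩
    intro hcon
    apply h.1 y hy
    have hy2 : y.2⁻¹ = 1 := hcon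
    rw [← inv_inv y.2, hy2, inv_one]
  · rw [linv]
    exact (List.isChain_map _).2 h.2

theorem isCycRed_linv {l : List (Ltr H4)} (h : IsCycRed H4 l) : IsCycRed H4 (linv l) := by
  refine ⟨isRed_linv h.1, ?_⟩
  intro a ha b hb hlen
  rw [linv, List.length_map] at hlen
  rw [linv, List.head?_map] at ha
  rw [linv, List.getLast?_map] at hb
  rcases hl1 : l.head? with _ | a'
  · rw [hl1] at ha; simp at ha
  rcases hl2 : l.getLast? with _ | b'
  · rw [hl2] at hb; simp at hb
  rw [hl1] at ha
  rw [hl2] at hb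
  have ha' : a = ⟨a'.1, a'.2⁻¹⟩ := by simpa using ha.symm
  have hb' : b = ⟨b'.1, b'.2⁻¹⟩ := by simpa using hb.symm
  rw [ha', hb']
  exact h.2 a' (by rw [hl1]; rfl) b' (by rw [hl2]; rfl) hlen

theorem red_linv (l : List (Ltr H4)) : red H4 (linv l) = linv (red H4 l) := by
  have h1 : red H4 (linv l) = red H4 (linv (red H4 l)) :=
    red_eq_of_eq H4 (by rw [listProd_linv, listProd_linv, listProd_red])
  rw [h1, red_eq_self H4 (isRed_linv (red_isRed H4 l))]

theorem linv_invol (l : List (Ltr H4)) : linv (linv l) = l := by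
  rw [linv, linv, List.map_map]
  have h : ((fun p => (⟨p.1, p.2⁻¹⟩ : Ltr H4)) ∘ fun p => (⟨p.1, p.2⁻¹⟩ : Ltr H4)) = id := by
    funext p
    rcases p with ⟨v, g⟩
    simp
  rw [h, List.map_id]

theorem mem_linv {l : List (Ltr H4)} (h : Mem H4 (⊤ : SimpleGraph Bool) l) :
    Mem H4 (⊤ : SimpleGraph Bool) (linv l) :=
  (mem_top_iff H4).2 (isCycRed_linv ((mem_top_iff H4).1 h))

/-- The letterwise-inversion map on the carrier. -/
def f0fun (x : Car4) : Car4 := ⟨linv x.val, mem_linv x.2⟩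

theorem f0fun_invol : Function.Involutive f0fun :=
  fun x => Subtype.ext (linv_invol x.val)

/-- The letterwise-inversion permutation. -/
def f0 : Equiv.Perm Car4 := f0fun_invol.toPerm

theorem f0_apply (x : Car4) : f0 x = f0fun x := rfl
theorem f0_symm_apply (x : Car4) : f0.symm x = f0fun x := rfl

theorem map_val_map_f0 (W : List Car4) :
    (W.map f0fun).map Subtype.val = (W.map Subtype.val).map linv := by
  exact List.map_map.trans
    (List.map_map (g := linv) (f := (Subtype.val : Car4 → List (Ltr H4))) (l := W)).symm

theorem f0_mapsD {W : List Car4} (hW : W ∈ pgD H4 ⊤) : W.map f0fun ∈ pgD H4 ⊤ := by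
  rw [mem_pgD_top_iff] at hW ⊢
  intro i j hij hj
  rw [List.length_map] at hj
  have key : ((((W.map f0fun).map Subtype.val).drop i).take (j + 1 - i)).flatten
      = linv ((((W.map Subtype.val).drop i).take (j + 1 - i)).flatten) := by
    rw [map_val_map_f0, ← List.map_drop, ← List.map_take, linv_eq, List.map_flatten]
  rw [key, red_linv]
  exact isCycRed_linv (hW i j hij hj)

theorem f0_isHom : IsHom (pgD H4 ⊤) (pgPi H4 ⊤) (pgD H4 ⊤) (pgPi H4 ⊤) f0fun := by
  refine ⟨fun W hW => f0_mapsD hW, fun W hW => ?_⟩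
  apply Subtype.ext
  rw [pgPi_val H4 (f0_mapsD hW)]
  have hr : (f0fun (pgPi H4 ⊤ W)).val = linv (red H4 ((W.map Subtype.val).flatten)) := by
    rw [f0fun, ← pgPi_val H4 hW]
  rw [hr, map_val_map_f0]
  have key : ((W.map Subtype.val).map linv).flatten = linv ((W.map Subtype.val).flatten) := by
    rw [linv_eq, List.map_flatten]
  rw [key, red_linv]

theorem f0_mem : f0 ∈ pgAut H4 (⊤ : SimpleGraph Bool) := by
  rw [mem_pgAut_iff]
  constructor
  · exact f0_isHom
  · have hcoe : ⇑f0.symm = f0fun := rfl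
    rw [hcoe]
    exact f0_isHom

theorem f0_bEl : f0 bEl = b2El := by
  apply Subtype.ext
  rw [f0_apply, f0fun]
  show linv [bL] = [b2L]
  rw [linv, List.map_cons, List.map_nil]
  have : (⟨bL.1, bL.2⁻¹⟩ : Ltr H4) = b2L := by
    rw [show bL.2⁻¹ = b2L.2 by rfl]
    rfl
  rw [this]

theorem f0_ne_one : f0 ≠ 1 := by
  intro h
  have h2 : f0 bEl = bEl := by
    simpa using congrArg (fun g : Equiv.Perm Car4 => g bEl) h
  rw [f0_bEl] at h2
  have := congrArg Subtype.val h2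
  rw [b2El_val, bEl_val] at this
  have h3 : b2L = bL := by simpa using this
  exact (by decide : b2L ≠ bL) h3

/-- Classification of automorphisms. -/
theorem aut_classify {f : Equiv.Perm Car4} (hf : f ∈ pgAut H4 (⊤ : SimpleGraph Bool)) :
    f = 1 ∨ f = f0 := by
  rcases aut_bEl hf with hb | hb
  · left
    apply Equiv.ext
    intro x
    exact aut_rigid hf (aut_aEl hf) hb x
  · right
    have hmem : f0⁻¹ * f ∈ pgAut H4 (⊤ : SimpleGraph Bool) :=
      mul_mem (inv_mem f0_mem) hf
    have h1 : (f0⁻¹ * f) bEl = bEl := by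
      rw [Equiv.Perm.mul_apply, hb]
      show f0.symm b2El = bEl
      rw [f0_symm_apply]
      apply Subtype.ext
      show linv [b2L] = [bL]
      rw [linv, List.map_cons, List.map_nil]
      have : (⟨b2L.1, b2L.2⁻¹⟩ : Ltr H4) = bL := by
        rw [show b2L.2⁻¹ = bL.2 by rfl]
        rfl
      rw [this]
    have h2 : f0⁻¹ * f = 1 := by
      apply Equiv.ext
      intro x
      exact aut_rigid hmem (aut_aEl hmem) h1 x
    have := congrArg (fun g => f0 * g) h2
    simpa [mul_assoc] using this

end Inversion

/-- For `G = K₂` decorated with `ℤ/2` and `ℤ/3`, `Aut_Part(M(G,H))` is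
cyclic of order `2`, its unique nontrivial element being the letterwise inversion (which fixes
the nonidentity element of `ℤ/2` and swaps the two nonidentity elements of `ℤ/3`); every
automorphism preserves `H̃_a` and `H̃_b`, so every automorphism covers only the identity graph
automorphism, while `Aut_Graphs(K₂)` has order `2`. -/
theorem statement4 :
    -- `Aut_Part(M(G,H))` is cyclic of order 2
    IsCyclic ↥(pgAut H4 (⊤ : SimpleGraph Bool)) ∧
    Nat.card ↥(pgAut H4 (⊤ : SimpleGraph Bool)) = 2 ∧
    -- its unique nontrivial element is the letterwise inversion
    (∃ f₀ : ↥(pgAut H4 (⊤ : SimpleGraph Bool)), f₀ ≠ 1 ∧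
      (∀ x : Carrier H4 (⊤ : SimpleGraph Bool),
        ((f₀ : Equiv.Perm (Carrier H4 (⊤ : SimpleGraph Bool))) x).val
          = x.val.map fun p => ⟨p.1, p.2⁻¹⟩) ∧
      ∀ g : ↥(pgAut H4 (⊤ : SimpleGraph Bool)), g = 1 ∨ g = f₀) ∧
    -- every automorphism preserves each `H̃ᵥ`
    (∀ (f : ↥(pgAut H4 (⊤ : SimpleGraph Bool))) (b : Bool),
      ((f : Equiv.Perm (Carrier H4 (⊤ : SimpleGraph Bool))) : Carrier H4 ⊤ → Carrier H4 ⊤) ''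
          Htilde H4 (⊤ : SimpleGraph Bool) b
        = Htilde H4 (⊤ : SimpleGraph Bool) b) ∧
    -- hence every automorphism covers the identity graph automorphism: the homomorphism to
    -- `Aut_Graphs(K₂)` is trivial, in particular not surjective since
    (∀ f : ↥(pgAut H4 (⊤ : SimpleGraph Bool)),
      CoversVia H4 (⊤ : SimpleGraph Bool)
        ((f : Equiv.Perm (Carrier H4 (⊤ : SimpleGraph Bool))) : Carrier H4 ⊤ → Carrier H4 ⊤)
        (id : Bool → Bool)) ∧
    -- `Aut_Graphs(K₂)` has order 2
    Nat.card ↥(graphAut (⊤ : SimpleGraph Bool)) = 2 := by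
  classical
  set F0 : ↥(pgAut H4 (⊤ : SimpleGraph Bool)) := ⟨f0, f0_mem⟩ with hF0def
  have hclass : ∀ g : ↥(pgAut H4 (⊤ : SimpleGraph Bool)), g = 1 ∨ g = F0 := by
    intro g
    rcases aut_classify g.2 with h | h
    · exact Or.inl (Subtype.ext h)
    · exact Or.inr (Subtype.ext h)
  have hF0ne : F0 ≠ 1 := by
    intro h
    exact f0_ne_one (congrArg Subtype.val h)
  have hcard : Nat.card ↥(pgAut H4 (⊤ : SimpleGraph Bool)) = 2 := by
    rw [Nat.card_eq_two_iff]
    refine ⟨1, F0, Ne.symm hF0ne, ?_⟩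
    ext g
    simp only [Set.mem_insert_iff, Set.mem_singleton_iff, Set.mem_univ, iff_true]
    exact hclass g
  have hcyc : IsCyclic ↥(pgAut H4 (⊤ : SimpleGraph Bool)) := by
    haveI : Fact (Nat.Prime 2) := ⟨Nat.prime_two⟩
    exact isCyclic_of_prime_card hcard
  have hmapsto : ∀ (b : Bool), ∀ y ∈ Htilde H4 (⊤ : SimpleGraph Bool) b,
      f0fun y ∈ Htilde H4 (⊤ : SimpleGraph Bool) b := by
    intro b y hy
    rcases hy with hnil | ⟨h, hne, hval⟩
    · left
      show linv y.val = []
      rw [hnil]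
      rfl
    · right
      refine ⟨h⁻¹, fun hc => hne (inv_eq_one.1 hc), ?_⟩
      show linv y.val = _
      rw [hval]
      rfl
  refine ⟨hcyc, hcard, ⟨F0, hF0ne, fun x => rfl, hclass⟩, ?_, ?_, ?_⟩
  · -- Htilde preservation
    intro f b
    rcases hclass f with rfl | rfl
    · have h1 : ((↑(1 : ↥(pgAut H4 (⊤ : SimpleGraph Bool))) : Equiv.Perm Car4) :
          Car4 → Car4) = id := rfl
      rw [h1, Set.image_id]
    · ext y
      constructor
      · rintro ⟨x, hx, rfl⟩
        exact hmapsto b x hx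
      · intro hy
        exact ⟨f0fun y, hmapsto b y hy, f0fun_invol y⟩
  · -- CoversVia
    intro f v h hne
    rcases hclass f with rfl | rfl
    · exact ⟨h, hne, rfl⟩
    · exact ⟨h⁻¹, fun hc => hne (inv_eq_one.1 hc), rfl⟩
  · -- graphAut K₂ has order 2
    have htop : graphAut (⊤ : SimpleGraph Bool) = ⊤ := by
      ext σ
      simp only [Subgroup.mem_top, iff_true]
      constructor
      · intro a b hab
        simp only [SimpleGraph.top_adj] at hab ⊢
        exact σ.injective.ne hab
      · intro a b hab
        simp only [SimpleGraph.top_adj] at hab ⊢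
        exact σ.symm.injective.ne hab
    rw [htop, Subgroup.card_top, Nat.card_eq_fintype_card, Fintype.card_perm,
      Fintype.card_bool]
    rfl


end PaperPG
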